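/- Let w1, w2 be even integers ≥ 2. Consider the ℚ-linear map Φ : (P_H, P_D, P_V) ↦ P_H − P_D + P_V from the product (W_{w1}^ℚ⊗1) × V_{w1,w2}^ℚ[I_D] × (X1^{w1}⊗W_{w2}^ℚ) to V_{w1,w2}^ℚ. Its image is E_{w1,w2}^ℚ and its kernel is the one-dimensional ℚ-line spanned by (1 − X1^{w1}, 1 − X1^{w1}X2^{w2}, X1^{w1}(1 − X2^{w2})); in particular 1 − X1^{w1} ∈ W_{w1}^ℚ⊗1, 1 − X1^{w1}X2^{w2} ∈ V_{w1,w2}^ℚ[I_D], X1^{w1}(1 − X2^{w2}) ∈ X1^{w1}⊗W_{w2}^ℚ, and any triple (P_H,P_D,P_V) in the product with P_H − P_D + P_V = 0 is a rational multiple of this one. -/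

import Mathlib

open MvPolynomial

/-- `SL(2, ℤ)`. -/
abbrev SL2Z := Matrix.SpecialLinearGroup (Fin 2) ℤ

/-- `S = [[0,-1],[1,0]]`. -/
def matS : SL2Z := ⟨!![0, -1; 1, 0], by norm_num [Matrix.det_fin_two_of]⟩

/-- `U = [[0,1],[-1,1]]`. -/
def matU : SL2Z := ⟨!![0, 1; -1, 1], by norm_num [Matrix.det_fin_two_of]⟩

/-- `T = [[1,1],[0,1]]`. -/
def matT : SL2Z := ⟨!![1, 1; 0, 1], by norm_num [Matrix.det_fin_two_of]⟩

/-- The weight-`w` action of `γ = [[a,b],[c,d]] ∈ SL(2,ℤ)` on a one-variable polynomial of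
degree ≤ w : `(γ·Q)(X) = (-cX+a)^w Q((dX-b)/(-cX+a))`, written coefficientwise. -/
noncomputable def polyAct1 {R : Type*} [CommRing R] (w : ℕ) (γ : SL2Z) (Q : Polynomial R) :
    Polynomial R :=
  ∑ m ∈ Finset.range (w + 1),
    Polynomial.C (Q.coeff m) *
      (Polynomial.C ((γ.1 1 1 : ℤ) : R) * Polynomial.X - Polynomial.C ((γ.1 0 1 : ℤ) : R)) ^ m *
      (Polynomial.C (-((γ.1 1 0 : ℤ) : R)) * Polynomial.X + Polynomial.C ((γ.1 0 0 : ℤ) : R)) ^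
        (w - m)

/-- `((dX-b)^m) * ((-cX+a)^n)` for `γ = [[a,b],[c,d]]`, in the variable `x`. -/
noncomputable def mfrac {R : Type*} [CommRing R] (γ : SL2Z) (x : MvPolynomial (Fin 2) R)
    (m n : ℕ) : MvPolynomial (Fin 2) R :=
  (MvPolynomial.C ((γ.1 1 1 : ℤ) : R) * x - MvPolynomial.C ((γ.1 0 1 : ℤ) : R)) ^ m *
    (MvPolynomial.C (-((γ.1 1 0 : ℤ) : R)) * x + MvPolynomial.C ((γ.1 0 0 : ℤ) : R)) ^ n

/-- The action of a pair `(γ1, γ2) ∈ SL(2,ℤ)²` on polynomials in `X1 = X 0`, `X2 = X 1` of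
degree ≤ w1 in `X1` and ≤ w2 in `X2`: the weight-`w1` action on `X1` via `γ1` and the
weight-`w2` action on `X2` via `γ2`. -/
noncomputable def polyAct2 {R : Type*} [CommRing R] (w1 w2 : ℕ) (γ1 γ2 : SL2Z)
    (P : MvPolynomial (Fin 2) R) : MvPolynomial (Fin 2) R :=
  ∑ m1 ∈ Finset.range (w1 + 1), ∑ m2 ∈ Finset.range (w2 + 1),
    MvPolynomial.C (MvPolynomial.coeff (Finsupp.single 0 m1 + Finsupp.single 1 m2) P) *
      mfrac γ1 (MvPolynomial.X 0) m1 (w1 - m1) * mfrac γ2 (MvPolynomial.X 1) m2 (w2 - m2)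

/-- Membership in `V_w^ℚ` : degree at most `w`. -/
def MemV1 (w : ℕ) (P : Polynomial ℚ) : Prop := P.natDegree ≤ w

/-- Membership in `W_w^ℚ = {P ∈ V_w^ℚ : (1+S)·P = 0, (1+U+U²)·P = 0}`. -/
def MemW1 (w : ℕ) (P : Polynomial ℚ) : Prop :=
  MemV1 w P ∧ P + polyAct1 w matS P = 0 ∧
    P + polyAct1 w matU P + polyAct1 w (matU ^ 2) P = 0

/-- Membership in `V_{w1,w2}^ℚ` : degree ≤ w1 in `X1 = X 0` and ≤ w2 in `X2 = X 1`. -/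
def MemV2 (w1 w2 : ℕ) (P : MvPolynomial (Fin 2) ℚ) : Prop :=
  MvPolynomial.degreeOf 0 P ≤ w1 ∧ MvPolynomial.degreeOf 1 P ≤ w2

/-- The embedding `P1(X) ↦ P1(X1)` of one-variable polynomials in the variable `X1 = X 0`. -/
noncomputable def toX1 (P1 : Polynomial ℚ) : MvPolynomial (Fin 2) ℚ :=
  Polynomial.aeval (MvPolynomial.X 0 : MvPolynomial (Fin 2) ℚ) P1


/-- The embedding `P2(X) ↦ P2(X2)` of one-variable polynomials in the variable `X2 = X 1`. -/
noncomputable def toX2 (P2 : Polynomial ℚ) : MvPolynomial (Fin 2) ℚ :=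
  Polynomial.aeval (MvPolynomial.X 1 : MvPolynomial (Fin 2) ℚ) P2

/-- Membership in `V_{w1,w2}^ℚ[I_D]` : lies in `V_{w1,w2}^ℚ` and is killed by
`(1,1)+(S,S)` and `(1,1)+(U,U)+(U²,U²)`. -/
def MemVID (w1 w2 : ℕ) (P : MvPolynomial (Fin 2) ℚ) : Prop :=
  MemV2 w1 w2 P ∧ P + polyAct2 w1 w2 matS matS P = 0 ∧
    P + polyAct2 w1 w2 matU matU P + polyAct2 w1 w2 (matU ^ 2) (matU ^ 2) P = 0

/-- Diagonal evaluation `P(X1,X2) ↦ P(Z,Z)`. -/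
noncomputable def diagEval (P : MvPolynomial (Fin 2) ℚ) : Polynomial ℚ :=
  MvPolynomial.aeval (fun _ : Fin 2 => (Polynomial.X : Polynomial ℚ)) P

/-- Membership in `W_{w1}^ℚ ⊗ 1 = {P1(X1) : P1 ∈ W_{w1}^ℚ}`. -/
def MemH (w1 : ℕ) (P : MvPolynomial (Fin 2) ℚ) : Prop :=
  ∃ P1 : Polynomial ℚ, MemW1 w1 P1 ∧ P = toX1 P1

/-- Membership in `X1^{w1} ⊗ W_{w2}^ℚ = {X1^{w1}·P2(X2) : P2 ∈ W_{w2}^ℚ}`. -/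
def MemVert (w1 w2 : ℕ) (P : MvPolynomial (Fin 2) ℚ) : Prop :=
  ∃ P2 : Polynomial ℚ, MemW1 w2 P2 ∧ P = MvPolynomial.X 0 ^ w1 * toX2 P2

/-- Membership in `E_{w1,w2}^ℚ = (W_{w1}^ℚ⊗1) + V_{w1,w2}^ℚ[I_D] + (X1^{w1}⊗W_{w2}^ℚ)`. -/
def MemE (w1 w2 : ℕ) (P : MvPolynomial (Fin 2) ℚ) : Prop :=
  ∃ h d v : MvPolynomial (Fin 2) ℚ,
    MemH w1 h ∧ MemVID w1 w2 d ∧ MemVert w1 w2 v ∧ P = h + d + v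

/-!
`V[I_D]` is closed under negation, so `Φ` and the sum map have the same image `E`. For the
kernel, `P_H - P_D + P_V = 0` forces `P_D = P1 ⊗ 1 + X^{w1} ⊗ P2` with `P1, P2` in the `W`'s.
Since `S` acts by `-1` on `P1, P2` and swaps `1` and `X^w` (w even), the `(S,S)`-relation of
`P_D` becomes `P1 ⊗ (1 - X^{w2}) = (1 - X^{w1}) ⊗ P2`; reading off the coefficients of
`X2^0` and `X1^0` gives `P1 = q (1 - X^{w1})` and `P2 = q (1 - X^{w2})` with `q = P2(0)`.
-/

section Action

variable {R : Type*} [CommRing R]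

lemma polyAct1_sub (w : ℕ) (γ : SL2Z) (P Q : Polynomial R) :
    polyAct1 w γ (P - Q) = polyAct1 w γ P - polyAct1 w γ Q := by
  simp [polyAct1, sub_mul, Finset.sum_sub_distrib]

lemma polyAct2_add (w1 w2 : ℕ) (γ1 γ2 : SL2Z) (P Q : MvPolynomial (Fin 2) R) :
    polyAct2 w1 w2 γ1 γ2 (P + Q) = polyAct2 w1 w2 γ1 γ2 P + polyAct2 w1 w2 γ1 γ2 Q := by
  simp [polyAct2, add_mul, Finset.sum_add_distrib]

lemma polyAct2_neg (w1 w2 : ℕ) (γ1 γ2 : SL2Z) (P : MvPolynomial (Fin 2) R) :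
    polyAct2 w1 w2 γ1 γ2 (-P) = -polyAct2 w1 w2 γ1 γ2 P := by
  simp [polyAct2, neg_mul, Finset.sum_neg_distrib]

lemma polyAct2_sub (w1 w2 : ℕ) (γ1 γ2 : SL2Z) (P Q : MvPolynomial (Fin 2) R) :
    polyAct2 w1 w2 γ1 γ2 (P - Q) = polyAct2 w1 w2 γ1 γ2 P - polyAct2 w1 w2 γ1 γ2 Q := by
  rw [sub_eq_add_neg, polyAct2_add, polyAct2_neg, ← sub_eq_add_neg]

lemma polyAct1_X_pow {w k : ℕ} (hk : k ≤ w) (γ : SL2Z) :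
    polyAct1 w γ (Polynomial.X ^ k : Polynomial R) =
      (Polynomial.C ((γ.1 1 1 : ℤ) : R) * Polynomial.X - Polynomial.C ((γ.1 0 1 : ℤ) : R)) ^ k *
      (Polynomial.C (-((γ.1 1 0 : ℤ) : R)) * Polynomial.X + Polynomial.C ((γ.1 0 0 : ℤ) : R)) ^
        (w - k) := by
  rw [polyAct1, Finset.sum_eq_single k]
  · simp
  · intro m _ hm
    simp [Polynomial.coeff_X_pow, hm]
  · intro hk'
    exact absurd (Finset.mem_range.mpr (by omega)) hk'

lemma polyAct1_one (w : ℕ) (γ : SL2Z) :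
    polyAct1 w γ (1 : Polynomial R) =
      (Polynomial.C (-((γ.1 1 0 : ℤ) : R)) * Polynomial.X + Polynomial.C ((γ.1 0 0 : ℤ) : R)) ^ w := by
  simpa using polyAct1_X_pow (R := R) (Nat.zero_le w) γ

lemma coe_matU_sq : ((matU ^ 2 : SL2Z) : Matrix (Fin 2) (Fin 2) ℤ) = !![-1, 1; -1, 0] := by
  rw [pow_two, Matrix.SpecialLinearGroup.coe_mul]
  simp [matU]

lemma polyAct1_matS_one {w : ℕ} (hw : Even w) :
    polyAct1 w matS (1 : Polynomial R) = Polynomial.X ^ w := by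
  rw [polyAct1_one]
  simp [matS, hw.neg_pow]

lemma polyAct1_matS_X_pow (w : ℕ) : polyAct1 w matS (Polynomial.X ^ w : Polynomial R) = 1 := by
  rw [polyAct1_X_pow le_rfl]
  simp [matS]

lemma polyAct1_matU_one (w : ℕ) : polyAct1 w matU (1 : Polynomial R) = Polynomial.X ^ w := by
  rw [polyAct1_one]
  simp [matU]

lemma polyAct1_matU_X_pow (w : ℕ) :
    polyAct1 w matU (Polynomial.X ^ w : Polynomial R) = (Polynomial.X - 1) ^ w := by
  rw [polyAct1_X_pow le_rfl]
  simp [matU]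

lemma polyAct1_matU_sq_one (w : ℕ) :
    polyAct1 w (matU ^ 2) (1 : Polynomial R) = (Polynomial.X - 1) ^ w := by
  rw [polyAct1_one, coe_matU_sq]
  simp [sub_eq_add_neg]

lemma polyAct1_matU_sq_X_pow {w : ℕ} (hw : Even w) :
    polyAct1 w (matU ^ 2) (Polynomial.X ^ w : Polynomial R) = 1 := by
  rw [polyAct1_X_pow le_rfl, coe_matU_sq]
  simp [hw.neg_one_pow]

end Action

lemma single_zero_add_single_one_eq_iff {i j m n : ℕ} :
    Finsupp.single (0 : Fin 2) i + Finsupp.single 1 j = Finsupp.single 0 m + Finsupp.single 1 n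
      ↔ i = m ∧ j = n := by
  constructor
  · intro h
    exact ⟨by simpa using DFunLike.congr_fun h 0, by simpa using DFunLike.congr_fun h 1⟩
  · rintro ⟨rfl, rfl⟩
    rfl

lemma coeff_toX1_mul_toX2 (A B : Polynomial ℚ) (m n : ℕ) :
    coeff (Finsupp.single 0 m + Finsupp.single 1 n) (toX1 A * toX2 B) = A.coeff m * B.coeff n := by
  induction A using Polynomial.induction_on' with
  | add A A' hA hA' => simp_all [toX1, add_mul]
  | monomial i a =>
    induction B using Polynomial.induction_on' with
    | add B B' hB hB' => simp_all [toX2, mul_add]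
    | monomial j b =>
      have hmon : toX1 (Polynomial.monomial i a) * toX2 (Polynomial.monomial j b)
          = monomial (Finsupp.single 0 i + Finsupp.single 1 j) (a * b) := by
        simp [toX1, toX2, X_pow_eq_monomial, C_mul_monomial, monomial_mul]
      simp only [hmon, coeff_monomial, single_zero_add_single_one_eq_iff, Polynomial.coeff_monomial]
      by_cases hi : i = m <;> by_cases hj : j = n <;> simp [hi, hj]

lemma polyAct2_toX1_mul_toX2 (w1 w2 : ℕ) (γ1 γ2 : SL2Z) (A B : Polynomial ℚ) :
    polyAct2 w1 w2 γ1 γ2 (toX1 A * toX2 B) = toX1 (polyAct1 w1 γ1 A) * toX2 (polyAct1 w2 γ2 B) := by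
  simp only [polyAct2, coeff_toX1_mul_toX2]
  simp only [polyAct1, toX1, toX2, map_sum, Finset.sum_mul_sum]
  refine Finset.sum_congr rfl fun m1 _ => Finset.sum_congr rfl fun m2 _ => ?_
  simp [mfrac]
  ring

lemma exists_eq_smul_of_toX1_mul_toX2_eq {A B C D : Polynomial ℚ}
    (h : toX1 A * toX2 B = toX1 C * toX2 D) (hB : B.coeff 0 = 1) (hC : C.coeff 0 = 1) :
    ∃ q : ℚ, A = q • C ∧ D = q • B := by
  have hcoeff (m n : ℕ) : A.coeff m * B.coeff n = C.coeff m * D.coeff n := by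
    rw [← coeff_toX1_mul_toX2, ← coeff_toX1_mul_toX2, h]
  have h00 : A.coeff 0 = D.coeff 0 := by simpa [hB, hC] using hcoeff 0 0
  refine ⟨D.coeff 0, ?_, ?_⟩
  · ext m
    simpa [hB, mul_comm] using hcoeff m 0
  · ext n
    have h0n := hcoeff 0 n
    rw [hC, one_mul, h00] at h0n
    rw [Polynomial.coeff_smul, smul_eq_mul, ← h0n]

lemma coeff_zero_one_sub_X_pow {R : Type*} [Ring R] {w : ℕ} (hw : w ≠ 0) :
    (1 - Polynomial.X ^ w : Polynomial R).coeff 0 = 1 := by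
  simp [Polynomial.coeff_X_pow, Ne.symm hw]

lemma memW1_one_sub_X_pow {w : ℕ} (hw : Even w) : MemW1 w (1 - Polynomial.X ^ w) := by
  refine ⟨(Polynomial.natDegree_sub_le _ _).trans (by simp), ?_, ?_⟩
  · rw [polyAct1_sub, polyAct1_matS_one hw, polyAct1_matS_X_pow]
    ring
  · rw [polyAct1_sub, polyAct1_sub, polyAct1_matU_one, polyAct1_matU_X_pow, polyAct1_matU_sq_one,
      polyAct1_matU_sq_X_pow hw]
    ring

lemma memH_one_sub_X_pow {w1 : ℕ} (hw1 : Even w1) : MemH w1 (1 - X 0 ^ w1) :=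
  ⟨1 - Polynomial.X ^ w1, memW1_one_sub_X_pow hw1, by simp [toX1]⟩

lemma memVert_X_pow_mul_one_sub_X_pow (w1 : ℕ) {w2 : ℕ} (hw2 : Even w2) :
    MemVert w1 w2 (X 0 ^ w1 * (1 - X 1 ^ w2)) :=
  ⟨1 - Polynomial.X ^ w2, memW1_one_sub_X_pow hw2, by simp [toX2]⟩

lemma memV2_one_sub_X_pow_mul_X_pow (w1 w2 : ℕ) : MemV2 w1 w2 (1 - X 0 ^ w1 * X 1 ^ w2) := by
  have hmon : (X 0 ^ w1 * X 1 ^ w2 : MvPolynomial (Fin 2) ℚ)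
      = monomial (Finsupp.single 0 w1 + Finsupp.single 1 w2) 1 := by
    simp [X_pow_eq_monomial, monomial_mul]
  rw [hmon]
  constructor <;>
  · refine (degreeOf_sub_le _ _ _).trans ?_
    simp [degreeOf_one, degreeOf_monomial_eq]

lemma memVID_one_sub_X_pow_mul_X_pow {w1 w2 : ℕ} (hw1 : Even w1) (hw2 : Even w2) :
    MemVID w1 w2 (1 - X 0 ^ w1 * X 1 ^ w2) := by
  have hsplit : (1 - X 0 ^ w1 * X 1 ^ w2 : MvPolynomial (Fin 2) ℚ)
      = toX1 1 * toX2 1 - toX1 (Polynomial.X ^ w1) * toX2 (Polynomial.X ^ w2) := by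
    simp [toX1, toX2]
  refine ⟨memV2_one_sub_X_pow_mul_X_pow w1 w2, ?_, ?_⟩
  · rw [hsplit, polyAct2_sub, polyAct2_toX1_mul_toX2, polyAct2_toX1_mul_toX2,
      polyAct1_matS_one hw1, polyAct1_matS_one hw2, polyAct1_matS_X_pow, polyAct1_matS_X_pow]
    ring
  · simp only [hsplit, polyAct2_sub, polyAct2_toX1_mul_toX2, polyAct1_matU_one,
      polyAct1_matU_X_pow, polyAct1_matU_sq_one, polyAct1_matU_sq_X_pow hw1,
      polyAct1_matU_sq_X_pow hw2]
    simp only [toX1, toX2, map_one, map_pow, map_sub, Polynomial.aeval_X]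
    ring

lemma memVID_neg {w1 w2 : ℕ} {d : MvPolynomial (Fin 2) ℚ} (hd : MemVID w1 w2 d) :
    MemVID w1 w2 (-d) := by
  obtain ⟨⟨hdeg0, hdeg1⟩, hS, hU⟩ := hd
  refine ⟨⟨by rwa [degreeOf_neg], by rwa [degreeOf_neg]⟩, ?_, ?_⟩
  · rw [polyAct2_neg]
    linear_combination -hS
  · rw [polyAct2_neg, polyAct2_neg]
    linear_combination -hU

lemma exists_sub_add_iff_memE (w1 w2 : ℕ) (P : MvPolynomial (Fin 2) ℚ) :
    (∃ h d v : MvPolynomial (Fin 2) ℚ,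
      MemH w1 h ∧ MemVID w1 w2 d ∧ MemVert w1 w2 v ∧ P = h - d + v) ↔ MemE w1 w2 P := by
  constructor <;>
  · rintro ⟨h, d, v, hh, hd, hv, rfl⟩
    exact ⟨h, -d, v, hh, memVID_neg hd, hv, by ring⟩

lemma toX1_mul_toX2_eq_of_matS {w1 w2 : ℕ} (hw2 : Even w2) {P1 P2 : Polynomial ℚ}
    (hP1 : P1 + polyAct1 w1 matS P1 = 0) (hP2 : P2 + polyAct1 w2 matS P2 = 0)
    (hd : toX1 P1 + X 0 ^ w1 * toX2 P2
      + polyAct2 w1 w2 matS matS (toX1 P1 + X 0 ^ w1 * toX2 P2) = 0) :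
    toX1 P1 * toX2 (1 - Polynomial.X ^ w2) = toX1 (1 - Polynomial.X ^ w1) * toX2 P2 := by
  have hsplit : toX1 P1 + X 0 ^ w1 * toX2 P2
      = toX1 P1 * toX2 1 + toX1 (Polynomial.X ^ w1) * toX2 P2 := by
    simp [toX1, toX2]
  rw [hsplit, polyAct2_add, polyAct2_toX1_mul_toX2, polyAct2_toX1_mul_toX2,
    polyAct1_matS_one hw2, polyAct1_matS_X_pow, eq_neg_of_add_eq_zero_right hP1,
    eq_neg_of_add_eq_zero_right hP2] at hd
  simp only [toX1, toX2, map_one, map_pow, map_sub, map_neg, Polynomial.aeval_X] at hd ⊢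
  linear_combination hd

lemma exists_smul_of_sub_add_eq_zero {w1 w2 : ℕ} (hw1 : w1 ≠ 0) (hw2 : Even w2) (hw2' : w2 ≠ 0)
    {h d v : MvPolynomial (Fin 2) ℚ} (hh : MemH w1 h) (hd : MemVID w1 w2 d)
    (hv : MemVert w1 w2 v) (hsum : h - d + v = 0) :
    ∃ q : ℚ, h = q • (1 - X 0 ^ w1) ∧ d = q • (1 - X 0 ^ w1 * X 1 ^ w2) ∧
      v = q • (X 0 ^ w1 * (1 - X 1 ^ w2)) := by
  obtain ⟨P1, hP1, rfl⟩ := hh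
  obtain ⟨P2, hP2, rfl⟩ := hv
  obtain rfl : d = toX1 P1 + X 0 ^ w1 * toX2 P2 := by linear_combination -hsum
  obtain ⟨q, rfl, rfl⟩ := exists_eq_smul_of_toX1_mul_toX2_eq
    (toX1_mul_toX2_eq_of_matS hw2 hP1.2.1 hP2.2.1 hd.2.1)
    (coeff_zero_one_sub_X_pow hw2') (coeff_zero_one_sub_X_pow hw1)
  refine ⟨q, ?_, ?_, ?_⟩ <;> simp only [toX1, toX2, map_smul, map_sub, map_one, map_pow,
    Polynomial.aeval_X, smul_eq_C_mul] <;> ring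

/-- The map `Φ : (P_H, P_D, P_V) ↦ P_H - P_D + P_V` on
`(W_{w1}^ℚ⊗1) × V_{w1,w2}^ℚ[I_D] × (X1^{w1}⊗W_{w2}^ℚ)` has image `E_{w1,w2}^ℚ` and kernel the
line spanned by `(1 - X1^{w1}, 1 - X1^{w1}X2^{w2}, X1^{w1}(1 - X2^{w2}))`. -/
theorem image_and_kernel_of_E_sum_map (w1 w2 : ℕ) (hw1 : Even w1) (hw2 : Even w2)
    (hw1' : 2 ≤ w1) (hw2' : 2 ≤ w2) :
    -- the distinguished triple lies in the product space
    MemH w1 (1 - MvPolynomial.X 0 ^ w1) ∧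
    MemVID w1 w2 (1 - MvPolynomial.X 0 ^ w1 * MvPolynomial.X 1 ^ w2) ∧
    MemVert w1 w2 (MvPolynomial.X 0 ^ w1 * (1 - MvPolynomial.X 1 ^ w2)) ∧
    -- the image of Φ is E_{w1,w2}^ℚ
    (∀ P : MvPolynomial (Fin 2) ℚ,
      (∃ h d v : MvPolynomial (Fin 2) ℚ,
        MemH w1 h ∧ MemVID w1 w2 d ∧ MemVert w1 w2 v ∧ P = h - d + v) ↔ MemE w1 w2 P) ∧
    -- the kernel of Φ is the line spanned by the distinguished triple
    (∀ h d v : MvPolynomial (Fin 2) ℚ, MemH w1 h → MemVID w1 w2 d → MemVert w1 w2 v →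
      h - d + v = 0 →
      ∃ q : ℚ, h = q • (1 - MvPolynomial.X 0 ^ w1) ∧
        d = q • (1 - MvPolynomial.X 0 ^ w1 * MvPolynomial.X 1 ^ w2) ∧
        v = q • (MvPolynomial.X 0 ^ w1 * (1 - MvPolynomial.X 1 ^ w2))) :=
  ⟨memH_one_sub_X_pow hw1, memVID_one_sub_X_pow_mul_X_pow hw1 hw2,
    memVert_X_pow_mul_one_sub_X_pow w1 hw2, exists_sub_add_iff_memE w1 w2,
    fun _ _ _ => exists_smul_of_sub_add_eq_zero (by omega) hw2 (by omega)⟩
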